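/- Let r > m > 0 be coprime integers with rm odd, and set a = (r − m)/2, b = 0, c = (r + m)/2 (these are integers since r and m are both odd). Then there exists a smooth diffeomorphism φ: ℝ² → ℝ² such that the immersions Ĩ_{r,m} and F_{a,b,c} ∘ φ induce the same first fundamental form: for every point p ∈ ℝ² and all vectors v, w ∈ ℝ², ⟨D(F_{a,b,c} ∘ φ)(p)v, D(F_{a,b,c} ∘ φ)(p)w⟩ = ⟨D Ĩ_{r,m}(p)v, D Ĩ_{r,m}(p)w⟩. (Hence the bipolar Lawson surface τ̃_{r,m} — a torus when rm ≡ 1 (mod 4), a Klein bottle when rm ≡ 3 (mod 4) — is isometric to the generalized Lawson surface T_{(r−m)/2,0,(r+m)/2}.) -/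

import Mathlib

open Real

open scoped RealInnerProductSpace

/-- The bipolar Lawson immersion `Ĩ_{r,m} : ℝ² → ℝ⁶`, whose image is the bipolar
Lawson surface `τ̃_{r,m}`. -/
noncomputable def bipolarLawson (r m : ℝ) : ℝ × ℝ → EuclideanSpace ℝ (Fin 6) := fun p =>
  (Real.sqrt (r^2 * Real.cos p.2 ^ 2 + m^2 * Real.sin p.2 ^ 2))⁻¹ •
    (WithLp.toLp 2 ![-(m * Real.sin p.2 * Real.cos p.2),
       r * Real.sin p.2 * Real.cos p.2,
       -(r * Real.cos p.2 ^ 2 * Real.sin (m * p.1) * Real.cos (r * p.1))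
         - m * Real.sin p.2 ^ 2 * Real.sin (r * p.1) * Real.cos (m * p.1),
       r * Real.cos p.2 ^ 2 * Real.cos (m * p.1) * Real.sin (r * p.1)
         + m * Real.sin p.2 ^ 2 * Real.cos (r * p.1) * Real.sin (m * p.1),
       -(r * Real.cos p.2 ^ 2 * Real.sin (m * p.1) * Real.sin (r * p.1))
         + m * Real.sin p.2 ^ 2 * Real.cos (r * p.1) * Real.cos (m * p.1),
       r * Real.cos p.2 ^ 2 * Real.cos (m * p.1) * Real.cos (r * p.1)
         - m * Real.sin p.2 ^ 2 * Real.sin (r * p.1) * Real.sin (m * p.1)] :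
      EuclideanSpace ℝ (Fin 6))

/-- The generalized Lawson immersion `F_{a,b,c} : ℝ² → ℂ³ ≅ ℝ⁶`, whose image (for
suitable integers `a`, `b`, `c`) is the generalized Lawson surface `T_{a,b,c}`. -/
noncomputable def genLawson (a b c : ℝ) : ℝ × ℝ → EuclideanSpace ℝ (Fin 6) := fun p =>
  WithLp.toLp 2 ![Real.sqrt ((b^2 + c^2 - a^2) / (2 * (c^2 - a^2))) * Real.cos (a * p.1) * Real.sin p.2,
    Real.sqrt ((b^2 + c^2 - a^2) / (2 * (c^2 - a^2))) * Real.sin (a * p.1) * Real.sin p.2,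
    Real.sqrt ((a^2 + c^2 - b^2) / (2 * (c^2 - b^2))) * Real.cos (b * p.1) * Real.cos p.2,
    Real.sqrt ((a^2 + c^2 - b^2) / (2 * (c^2 - b^2))) * Real.sin (b * p.1) * Real.cos p.2,
    Real.sqrt ((c^2 - a^2 - b^2) / (2 * (c^2 - b^2))) * Real.cos (c * p.1) *
      Real.sqrt (1 - (b^2 - a^2) / (c^2 - a^2) * Real.sin p.2 ^ 2),
    Real.sqrt ((c^2 - a^2 - b^2) / (2 * (c^2 - b^2))) * Real.sin (c * p.1) *
      Real.sqrt (1 - (b^2 - a^2) / (c^2 - a^2) * Real.sin p.2 ^ 2)]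

/-! ### Auxiliary material: the reparametrization `ψ` -/

noncomputable def psifun (a c : ℝ) (v : ℝ) : ℝ :=
  Real.pi/2 - 2*v + Real.arctan (a * Real.sin (2*v) / (c + a * Real.cos (2*v)))

variable {a c : ℝ}

lemma q_pos (ha : 0 < a) (hac : a < c) (v : ℝ) : 0 < c + a * Real.cos (2*v) := by
  nlinarith [Real.neg_one_le_cos (2*v), Real.cos_le_one (2*v)]

lemma D_pos (ha : 0 < a) (hac : a < c) (v : ℝ) :
    0 < a^2 + c^2 + 2*a*c*Real.cos (2*v) := by
  nlinarith [Real.neg_one_le_cos (2*v), sq_nonneg (a - c), mul_pos ha (ha.trans hac)]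

lemma one_add_sq (ha : 0 < a) (hac : a < c) (v : ℝ) :
    1 + (a * Real.sin (2*v) / (c + a * Real.cos (2*v)))^2
      = (a^2 + c^2 + 2*a*c*Real.cos (2*v)) / (c + a * Real.cos (2*v))^2 := by
  have hq := q_pos ha hac v
  field_simp
  linear_combination (a^2 : ℝ) * (Real.sin_sq_add_cos_sq (2*v))

lemma cos_arctan' (ha : 0 < a) (hac : a < c) (v : ℝ) :
    Real.cos (Real.arctan (a * Real.sin (2*v) / (c + a * Real.cos (2*v))))
      = (c + a * Real.cos (2*v)) / Real.sqrt (a^2 + c^2 + 2*a*c*Real.cos (2*v)) := by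
  have hq := q_pos ha hac v
  have hD := D_pos ha hac v
  rw [Real.cos_arctan, one_add_sq ha hac v, Real.sqrt_div hD.le, Real.sqrt_sq hq.le,
    one_div_div]

lemma sin_arctan' (ha : 0 < a) (hac : a < c) (v : ℝ) :
    Real.sin (Real.arctan (a * Real.sin (2*v) / (c + a * Real.cos (2*v))))
      = a * Real.sin (2*v) / Real.sqrt (a^2 + c^2 + 2*a*c*Real.cos (2*v)) := by
  have hq := q_pos ha hac v
  have hD := D_pos ha hac v
  have hsD : (0:ℝ) < Real.sqrt (a^2 + c^2 + 2*a*c*Real.cos (2*v)) := Real.sqrt_pos.mpr hD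
  rw [Real.sin_arctan, one_add_sq ha hac v, Real.sqrt_div hD.le, Real.sqrt_sq hq.le]
  field_simp

lemma sin_psi (ha : 0 < a) (hac : a < c) (v : ℝ) :
    Real.sin (psifun a c v) * Real.sqrt (a^2 + c^2 + 2*a*c*Real.cos (2*v))
      = a + c * Real.cos (2*v) := by
  have hq := q_pos ha hac v
  have hD := D_pos ha hac v
  have hsD : (0:ℝ) < Real.sqrt (a^2 + c^2 + 2*a*c*Real.cos (2*v)) := Real.sqrt_pos.mpr hD
  have hsq : (Real.sqrt (a^2 + c^2 + 2*a*c*Real.cos (2*v)))^2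
      = a^2 + c^2 + 2*a*c*Real.cos (2*v) := Real.sq_sqrt hD.le
  rw [psifun, show Real.pi/2 - 2*v + Real.arctan (a * Real.sin (2*v) / (c + a * Real.cos (2*v)))
      = Real.pi/2 - (2*v - Real.arctan (a * Real.sin (2*v) / (c + a * Real.cos (2*v)))) by ring,
    Real.sin_pi_div_two_sub, Real.cos_sub, cos_arctan' ha hac v, sin_arctan' ha hac v]
  set S := Real.sqrt (a^2 + c^2 + 2*a*c*Real.cos (2*v)) with hS
  field_simp
  linear_combination a * Real.sin_sq_add_cos_sq (2*v)

lemma cos_psi (ha : 0 < a) (hac : a < c) (v : ℝ) :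
    Real.cos (psifun a c v) * Real.sqrt (a^2 + c^2 + 2*a*c*Real.cos (2*v))
      = c * Real.sin (2*v) := by
  have hq := q_pos ha hac v
  have hD := D_pos ha hac v
  have hsD : (0:ℝ) < Real.sqrt (a^2 + c^2 + 2*a*c*Real.cos (2*v)) := Real.sqrt_pos.mpr hD
  have hsq : (Real.sqrt (a^2 + c^2 + 2*a*c*Real.cos (2*v)))^2
      = a^2 + c^2 + 2*a*c*Real.cos (2*v) := Real.sq_sqrt hD.le
  rw [psifun, show Real.pi/2 - 2*v + Real.arctan (a * Real.sin (2*v) / (c + a * Real.cos (2*v)))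
      = Real.pi/2 - (2*v - Real.arctan (a * Real.sin (2*v) / (c + a * Real.cos (2*v)))) by ring,
    Real.cos_pi_div_two_sub, Real.sin_sub, cos_arctan' ha hac v, sin_arctan' ha hac v]
  set S := Real.sqrt (a^2 + c^2 + 2*a*c*Real.cos (2*v)) with hS
  field_simp
  ring

lemma psifun_hasDerivAt (ha : 0 < a) (hac : a < c) (v : ℝ) :
    HasDerivAt (psifun a c)
      (-2*c*(c + a * Real.cos (2*v)) / (a^2 + c^2 + 2*a*c*Real.cos (2*v))) v := by
  have hq := q_pos ha hac v
  have hD := D_pos ha hac v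
  have h2 : HasDerivAt (fun v : ℝ => 2*v) 2 v := by
    simpa using (hasDerivAt_id v).const_mul (2:ℝ)
  have hsin : HasDerivAt (fun v : ℝ => Real.sin (2*v)) (Real.cos (2*v) * 2) v :=
    (Real.hasDerivAt_sin (2*v)).comp v h2
  have hcos : HasDerivAt (fun v : ℝ => Real.cos (2*v)) (-Real.sin (2*v) * 2) v :=
    (Real.hasDerivAt_cos (2*v)).comp v h2
  have hnum : HasDerivAt (fun v : ℝ => a * Real.sin (2*v)) (a * (Real.cos (2*v) * 2)) v :=
    hsin.const_mul a
  have hden : HasDerivAt (fun v : ℝ => c + a * Real.cos (2*v)) (0 + a * (-Real.sin (2*v) * 2)) v :=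
    (hasDerivAt_const v c).add (hcos.const_mul a)
  have hdiv := hnum.div hden hq.ne'
  have harct := hdiv.arctan
  have hlin : HasDerivAt (fun v : ℝ => Real.pi/2 - 2*v) (-2) v := by
    exact ((hasDerivAt_const v (Real.pi/2)).sub h2).congr_deriv (by ring)
  have := hlin.add harct
  convert this using 1
  · rfl
  · rfl
  · rfl
  simp only [Pi.div_apply]
  rw [show a*(Real.cos (2*v)*2)*(c + a*Real.cos (2*v))
      - a*Real.sin (2*v)*(0 + a*(-Real.sin (2*v)*2)) = 2*a^2 + 2*a*c*Real.cos (2*v) from by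
        linear_combination 2*a^2 * Real.sin_sq_add_cos_sq (2*v),
    one_add_sq ha hac v, one_div_div]
  set D := a^2 + c^2 + 2*a*c*Real.cos (2*v) with hDdef
  field_simp
  rw [hDdef]
  ring

lemma psifun_contDiff (ha : 0 < a) (hac : a < c) : ContDiff ℝ (⊤ : ℕ∞) (psifun a c) := by
  have h1 : ContDiff ℝ (⊤ : ℕ∞) (fun v : ℝ => 2*v) := contDiff_const.mul contDiff_id
  have hs : ContDiff ℝ (⊤ : ℕ∞) (fun v : ℝ => a * Real.sin (2*v)) :=
    contDiff_const.mul (Real.contDiff_sin.comp h1)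
  have hc : ContDiff ℝ (⊤ : ℕ∞) (fun v : ℝ => c + a * Real.cos (2*v)) :=
    contDiff_const.add (contDiff_const.mul (Real.contDiff_cos.comp h1))
  exact ((contDiff_const.sub h1).add
    (Real.contDiff_arctan.comp (hs.div hc (fun v => (q_pos ha hac v).ne'))))

lemma psifun_strictAnti (ha : 0 < a) (hac : a < c) : StrictAnti (psifun a c) := by
  apply strictAnti_of_deriv_neg
  intro v
  rw [(psifun_hasDerivAt ha hac v).deriv]
  apply div_neg_of_neg_of_pos
  · nlinarith [q_pos ha hac v, ha.trans hac]
  · exact D_pos ha hac v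

lemma psifun_surjective (ha : 0 < a) (hac : a < c) : Function.Surjective (psifun a c) := by
  intro y
  have hcont : Continuous (psifun a c) := (psifun_contDiff ha hac).continuous
  have h1 : psifun a c (-y/2) ≥ y := by
    have := Real.neg_pi_div_two_lt_arctan
      (a * Real.sin (2*(-y/2)) / (c + a * Real.cos (2*(-y/2))))
    have hpi := Real.pi_pos
    rw [psifun]; nlinarith
  have h2 : psifun a c ((Real.pi - y)/2) ≤ y := by
    have := Real.arctan_lt_pi_div_two
      (a * Real.sin (2*((Real.pi - y)/2)) / (c + a * Real.cos (2*((Real.pi - y)/2))))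
    rw [psifun]; nlinarith
  have hle : (-y/2 : ℝ) ≤ (Real.pi - y)/2 := by nlinarith [Real.pi_pos]
  have := intermediate_value_Icc' hle hcont.continuousOn
  have hy : y ∈ Set.Icc (psifun a c ((Real.pi - y)/2)) (psifun a c (-y/2)) := ⟨h2, h1⟩
  obtain ⟨v, _, hv⟩ := this hy
  exact ⟨v, hv⟩

lemma psifun_deriv_ne (ha : 0 < a) (hac : a < c) (v : ℝ) :
    (-2*c*(c + a * Real.cos (2*v)) / (a^2 + c^2 + 2*a*c*Real.cos (2*v))) ≠ 0 := by
  have hq := q_pos ha hac v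
  have hD := D_pos ha hac v
  have : -2*c*(c + a * Real.cos (2*v)) < 0 := by nlinarith [ha.trans hac]
  exact ne_of_lt (div_neg_of_neg_of_pos this hD)

/-- ψ as an equivalence of ℝ. -/
noncomputable def psiEquiv (ha : 0 < a) (hac : a < c) : ℝ ≃ ℝ :=
  Equiv.ofBijective (psifun a c)
    ⟨(psifun_strictAnti ha hac).injective, psifun_surjective ha hac⟩

lemma psiEquiv_symm_contDiff (ha : 0 < a) (hac : a < c) :
    ContDiff ℝ (⊤ : ℕ∞) ((psiEquiv ha hac).symm : ℝ → ℝ) := by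
  rw [contDiff_iff_contDiffAt]
  intro x
  set v := (psiEquiv ha hac).symm x with hv
  have hx : psifun a c v = x := (psiEquiv ha hac).apply_symm_apply x
  have hder := psifun_hasDerivAt ha hac v
  have hne := psifun_deriv_ne ha hac v
  have hF : HasFDerivAt (psifun a c)
      (((ContinuousLinearEquiv.unitsEquivAut ℝ) (Units.mk0 _ hne) : ℝ ≃L[ℝ] ℝ) : ℝ →L[ℝ] ℝ) v :=
    hder.hasFDerivAt_equiv hne
  have hc : ContDiffAt ℝ (⊤ : ℕ∞) (psifun a c) v := (psifun_contDiff ha hac).contDiffAt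
  have hlocal : ContDiffAt ℝ (⊤ : ℕ∞) (hc.localInverse hF (by simp)) (psifun a c v) :=
    hc.to_localInverse hF (by simp)
  rw [hx] at hlocal
  apply hlocal.congr_of_eventuallyEq
  have hev : ∀ᶠ y in nhds (psifun a c v),
      psifun a c ((hc.localInverse hF (by simp)) y) = y :=
    (hc.hasStrictFDerivAt' hF (by simp)).eventually_right_inverse
  rw [hx] at hev
  filter_upwards [hev] with y hy
  apply (psifun_strictAnti ha hac).injective
  rw [hy]
  exact (psiEquiv ha hac).apply_symm_apply y

/-! ### The orthogonal congruence `L` of ℝ⁶ -/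

@[simp] lemma cons_val_five' {α : Type*} (x : α) (u : Fin 5 → α) :
    Matrix.vecCons x u 5 = u 4 := rfl

noncomputable def Lfun (r m : ℝ) : EuclideanSpace ℝ (Fin 6) → EuclideanSpace ℝ (Fin 6) :=
  fun x =>
  (WithLp.toLp 2 ![ (x 5 - x 4) / Real.sqrt 2,
      (x 2 + x 3) / Real.sqrt 2,
      (-(m * x 0) + r * x 1) / Real.sqrt (r^2 + m^2),
      (r * x 0 + m * x 1) / Real.sqrt (r^2 + m^2),
      (x 4 + x 5) / Real.sqrt 2,
      (x 3 - x 2) / Real.sqrt 2 ] : EuclideanSpace ℝ (Fin 6))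

noncomputable def Lginv (r m : ℝ) : EuclideanSpace ℝ (Fin 6) → EuclideanSpace ℝ (Fin 6) :=
  fun y =>
  (WithLp.toLp 2 ![ (-(m * y 2) + r * y 3) / Real.sqrt (r^2 + m^2),
      (r * y 2 + m * y 3) / Real.sqrt (r^2 + m^2),
      (y 1 - y 5) / Real.sqrt 2,
      (y 1 + y 5) / Real.sqrt 2,
      (-(y 0) + y 4) / Real.sqrt 2,
      (y 0 + y 4) / Real.sqrt 2 ] : EuclideanSpace ℝ (Fin 6))

set_option maxHeartbeats 2000000 in
noncomputable def Liso {r m : ℝ} (hm : 0 < m) (hrm : m < r) :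
    EuclideanSpace ℝ (Fin 6) ≃ₗᵢ[ℝ] EuclideanSpace ℝ (Fin 6) := by
  have hr : (0:ℝ) < r := hm.trans hrm
  have hs2 : Real.sqrt 2 ^ 2 = 2 := Real.sq_sqrt (by norm_num)
  have hs2ne : Real.sqrt 2 ≠ 0 := by positivity
  have hrm2 : (0:ℝ) < r^2 + m^2 := by positivity
  have hsrm : Real.sqrt (r^2 + m^2) ^ 2 = r^2 + m^2 := Real.sq_sqrt hrm2.le
  have hsrmne : Real.sqrt (r^2 + m^2) ≠ 0 := by positivity
  refine LinearEquiv.isometryOfInner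
    { toFun := Lfun r m
      invFun := Lginv r m
      map_add' := ?_
      map_smul' := ?_
      left_inv := ?_
      right_inv := ?_ } ?_
  · intro x y
    ext i
    fin_cases i <;> simp [Lfun, PiLp.add_apply] <;> ring
  · intro t x
    ext i
    fin_cases i <;> simp [Lfun, PiLp.smul_apply, smul_eq_mul] <;> ring
  · intro x
    ext i
    fin_cases i <;> simp [Lfun, Lginv] <;> try field_simp
    all_goals first
      | ring1
      | linear_combination (-(x 0)) * hsrm
      | linear_combination (-(x 1)) * hsrm
      | linear_combination (x 0) * hsrm
      | linear_combination (x 1) * hsrm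
      | (rw [Real.sq_sqrt (by positivity)]; ring1)
  · intro x
    ext i
    fin_cases i <;> simp [Lfun, Lginv] <;> try field_simp
    all_goals first
      | ring1
      | linear_combination (-(x 2)) * hsrm
      | linear_combination (-(x 3)) * hsrm
      | linear_combination (x 2) * hsrm
      | linear_combination (x 3) * hsrm
      | (rw [Real.sq_sqrt (by positivity)]; ring1)
  · intro x y
    simp only [LinearEquiv.coe_mk, Equiv.coe_fn_mk, LinearMap.coe_mk, AddHom.coe_mk]
    rw [PiLp.inner_apply, PiLp.inner_apply]
    simp only [RCLike.inner_apply, conj_trivial, Fin.sum_univ_six, Lfun,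
      Matrix.cons_val_zero, Matrix.cons_val_one, Matrix.head_cons, Matrix.cons_val_two,
      Matrix.tail_cons, Matrix.cons_val_three, Matrix.cons_val_four, cons_val_five']
    field_simp
    first
      | ring1
      | linear_combination (x 0 * y 0 + x 1 * y 1) * (2:ℝ) * hsrm +
          (x 2 * y 2 + x 3 * y 3 + x 4 * y 4 + x 5 * y 5) * (r^2+m^2) * hs2
      | linear_combination (-(x 0 * y 0 + x 1 * y 1)) * (2:ℝ) * hsrm -
          (x 2 * y 2 + x 3 * y 3 + x 4 * y 4 + x 5 * y 5) * (r^2+m^2) * hs2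
      | linear_combination (-(x 0 * y 0 + x 1 * y 1) * Real.sqrt 2 ^ 2) * hsrm -
          ((x 2 * y 2 + x 3 * y 3 + x 4 * y 4 + x 5 * y 5) * Real.sqrt (r^2+m^2) ^ 2) * hs2

/-! ### The key pointwise identity -/

set_option maxHeartbeats 4000000 in
lemma key (r m : ℝ) (hm : 0 < m) (hrm : m < r) (u v : ℝ) :
    genLawson ((r-m)/2) 0 ((r+m)/2) (2*u, psifun ((r-m)/2) ((r+m)/2) v)
      = Lfun r m (bipolarLawson r m (u, v)) := by
  have ha : (0:ℝ) < (r-m)/2 := by linarith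
  have hac : (r-m)/2 < (r+m)/2 := by linarith
  have hr : (0:ℝ) < r := hm.trans hrm
  have hrmsq : m^2 ≤ r^2 := by nlinarith
  have hDb : (0:ℝ) < r^2*Real.cos v^2 + m^2*Real.sin v^2 := by
    nlinarith [Real.sin_sq_add_cos_sq v, sq_nonneg (Real.cos v), mul_pos hm hm, hrmsq]
  set ρ := Real.sqrt (r^2*Real.cos v^2 + m^2*Real.sin v^2) with hρdef
  have hρpos : 0 < ρ := Real.sqrt_pos.mpr hDb
  have hρne : ρ ≠ 0 := hρpos.ne'
  have hρ2 : ρ^2 = r^2*Real.cos v^2 + m^2*Real.sin v^2 := Real.sq_sqrt hDb.le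
  have harg : ((r-m)/2)^2+((r+m)/2)^2+2*((r-m)/2)*((r+m)/2)*Real.cos (2*v)
      = r^2*Real.cos v^2 + m^2*Real.sin v^2 := by
    rw [Real.cos_two_mul]
    linear_combination (-(m^2)) * Real.sin_sq_add_cos_sq v
  set ψ := psifun ((r-m)/2) ((r+m)/2) v with hψdef
  have hsin : Real.sin ψ * ρ = r*Real.cos v^2 - m*Real.sin v^2 := by
    have h := sin_psi ha hac v
    rw [harg, Real.cos_two_mul] at h
    rw [← hρdef, ← hψdef] at h
    linear_combination h + m * Real.sin_sq_add_cos_sq v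
  have hcos : Real.cos ψ * ρ = (r+m)*(Real.sin v*Real.cos v) := by
    have h := cos_psi ha hac v
    rw [harg, Real.sin_two_mul] at h
    rw [← hρdef, ← hψdef] at h
    linear_combination h
  have hs2ne : Real.sqrt 2 ≠ 0 := by positivity
  have hs2 : Real.sqrt 2^2 = 2 := Real.sq_sqrt (by norm_num)
  have hrm2 : (0:ℝ) < r^2+m^2 := by positivity
  have hsrm : Real.sqrt (r^2+m^2)^2 = r^2+m^2 := Real.sq_sqrt hrm2.le
  have hsrmne : Real.sqrt (r^2+m^2) ≠ 0 := by positivity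
  have hsψ : Real.sin ψ = (r*Real.cos v^2 - m*Real.sin v^2)/ρ := by
    rw [eq_div_iff hρne]; exact hsin
  have hcψ : Real.cos ψ = ((r+m)*(Real.sin v*Real.cos v))/ρ := by
    rw [eq_div_iff hρne]; exact hcos
  have hcane : ((r+m)/2)^2 - ((r-m)/2)^2 ≠ 0 := by
    rw [show ((r+m)/2)^2 - ((r-m)/2)^2 = r*m from by ring]
    positivity
  have hrne : r ≠ 0 := hr.ne'
  have hmne : m ≠ 0 := hm.ne'
  have hrm0 : (0:ℝ) < r*m := mul_pos hr hm
  have hsv : Real.sin v^2 = 1 - Real.cos v^2 := by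
    linear_combination Real.sin_sq_add_cos_sq v
  have hcc : (2*(((r+m)/2)^2 - (0:ℝ)^2)) ≠ 0 := by nlinarith
  have hDb' : r^2*Real.cos v^2 + m^2*(1 - Real.cos v^2) ≠ 0 := by
    nlinarith [sq_nonneg (Real.cos v), mul_pos hm hm]
  have hco01 : Real.sqrt (((0:ℝ)^2 + ((r+m)/2)^2 - ((r-m)/2)^2)/(2*(((r+m)/2)^2 - ((r-m)/2)^2)))
      = 1/Real.sqrt 2 := by
    rw [show ((0:ℝ)^2 + ((r+m)/2)^2 - ((r-m)/2)^2)/(2*(((r+m)/2)^2 - ((r-m)/2)^2)) = (1:ℝ)/2 from by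
      rw [show ((0:ℝ)^2 + ((r+m)/2)^2 - ((r-m)/2)^2) = r*m from by ring,
        show (2*(((r+m)/2)^2 - ((r-m)/2)^2)) = 2*(r*m) from by ring,
        div_eq_div_iff (by positivity) (by norm_num : (2:ℝ) ≠ 0)]
      ring]
    rw [one_div, one_div, Real.sqrt_inv]
  have hco2 : Real.sqrt ((((r-m)/2)^2 + ((r+m)/2)^2 - (0:ℝ)^2)/(2*(((r+m)/2)^2 - (0:ℝ)^2)))
      = Real.sqrt (r^2+m^2)/(r+m) := by
    rw [show (((r-m)/2)^2 + ((r+m)/2)^2 - (0:ℝ)^2)/(2*(((r+m)/2)^2 - (0:ℝ)^2))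
        = (Real.sqrt (r^2+m^2)/(r+m))^2 from by
      rw [show (Real.sqrt (r^2+m^2)/(r+m))^2 = (r^2+m^2)/(r+m)^2 from by rw [div_pow, hsrm],
        div_eq_div_iff (by nlinarith : (0:ℝ) < 2*(((r+m)/2)^2 - (0:ℝ)^2)).ne'
          (by nlinarith : (0:ℝ) < (r+m)^2).ne']
      ring]
    exact Real.sqrt_sq (div_nonneg (Real.sqrt_nonneg _) (by linarith))
  have hco45 : Real.sqrt ((((r+m)/2)^2 - ((r-m)/2)^2 - (0:ℝ)^2)/(2*(((r+m)/2)^2 - (0:ℝ)^2)))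
      * Real.sqrt (1 - ((0:ℝ)^2 - ((r-m)/2)^2)/(((r+m)/2)^2 - ((r-m)/2)^2) * Real.sin ψ^2)
      = (r*Real.cos v^2 + m*Real.sin v^2)/(Real.sqrt 2 * ρ) := by
    rw [← Real.sqrt_mul (by
      apply div_nonneg
      · nlinarith
      · nlinarith)]
    rw [show ((((r+m)/2)^2 - ((r-m)/2)^2 - (0:ℝ)^2)/(2*(((r+m)/2)^2 - (0:ℝ)^2)))
        * (1 - ((0:ℝ)^2 - ((r-m)/2)^2)/(((r+m)/2)^2 - ((r-m)/2)^2) * Real.sin ψ^2)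
        = ((r*Real.cos v^2 + m*Real.sin v^2)/(Real.sqrt 2 * ρ))^2 from by
      rw [hsψ,
        show ((r*Real.cos v^2 + m*Real.sin v^2)/(Real.sqrt 2 * ρ))^2
          = (r*Real.cos v^2 + m*Real.sin v^2)^2/(2*(r^2*Real.cos v^2 + m^2*Real.sin v^2)) from by
            rw [div_pow, mul_pow, hs2, hρ2],
        show ((r*Real.cos v^2 - m*Real.sin v^2)/ρ)^2
          = (r*Real.cos v^2 - m*Real.sin v^2)^2/(r^2*Real.cos v^2 + m^2*Real.sin v^2) from by
            rw [div_pow, hρ2],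
        show (((r+m)/2)^2 - ((r-m)/2)^2 - (0:ℝ)^2)/(2*(((r+m)/2)^2 - (0:ℝ)^2))
          = 2*(r*m)/(r+m)^2 from by
            rw [div_eq_div_iff hcc (by positivity : ((r+m):ℝ)^2 ≠ 0)]
            ring,
        show ((0:ℝ)^2 - ((r-m)/2)^2)/(((r+m)/2)^2 - ((r-m)/2)^2)
          = -((r-m)^2)/(4*(r*m)) from by
            rw [div_eq_div_iff hcane (by positivity : (4*(r*m)) ≠ 0)]
            ring]
      rw [hsv]
      have hrma : (r+m) ≠ 0 := by positivity
      field_simp [hDb', hrma]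
      ring]
    apply Real.sqrt_sq
    apply div_nonneg
    · nlinarith
    · exact mul_nonneg (Real.sqrt_nonneg 2) hρpos.le
  ext i
  fin_cases i
  · show Real.sqrt (((0:ℝ)^2 + ((r+m)/2)^2 - ((r-m)/2)^2)/(2*(((r+m)/2)^2 - ((r-m)/2)^2)))
        * Real.cos ((r-m)/2*(2*u)) * Real.sin ψ = _
    simp only [Lfun, bipolarLawson, Matrix.cons_val_zero, Matrix.cons_val_one, Matrix.head_cons,
      Matrix.cons_val_two, Matrix.tail_cons, Matrix.cons_val_three, Matrix.cons_val_four,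
      cons_val_five', PiLp.smul_apply, smul_eq_mul, WithLp.ofLp_toLp, Matrix.cons_val_zero', Matrix.cons_val_succ']
    rw [hco01, hsψ, show (r-m)/2*(2*u) = r*u - m*u from by ring, Real.cos_sub]
    field_simp
    ring
  · show Real.sqrt (((0:ℝ)^2 + ((r+m)/2)^2 - ((r-m)/2)^2)/(2*(((r+m)/2)^2 - ((r-m)/2)^2)))
        * Real.sin ((r-m)/2*(2*u)) * Real.sin ψ = _
    simp only [Lfun, bipolarLawson, Matrix.cons_val_zero, Matrix.cons_val_one, Matrix.head_cons,
      Matrix.cons_val_two, Matrix.tail_cons, Matrix.cons_val_three, Matrix.cons_val_four,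
      cons_val_five', PiLp.smul_apply, smul_eq_mul, WithLp.ofLp_toLp, Matrix.cons_val_zero', Matrix.cons_val_succ']
    rw [hco01, hsψ, show (r-m)/2*(2*u) = r*u - m*u from by ring, Real.sin_sub]
    field_simp
    ring
  · show Real.sqrt ((((r-m)/2)^2 + ((r+m)/2)^2 - (0:ℝ)^2)/(2*(((r+m)/2)^2 - (0:ℝ)^2)))
        * Real.cos ((0:ℝ)*(2*u)) * Real.cos ψ = _
    simp only [Lfun, bipolarLawson, Matrix.cons_val_zero, Matrix.cons_val_one, Matrix.head_cons,
      Matrix.cons_val_two, Matrix.tail_cons, Matrix.cons_val_three, Matrix.cons_val_four,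
      cons_val_five', PiLp.smul_apply, smul_eq_mul, WithLp.ofLp_toLp, Matrix.cons_val_zero', Matrix.cons_val_succ']
    rw [hco2, hcψ, show (0:ℝ)*(2*u) = 0 from by ring, Real.cos_zero]
    field_simp
    linear_combination (Real.sin v * Real.cos v
      * Real.sqrt (r^2*Real.cos v^2 + m^2*Real.sin v^2)) * hsrm
  · show Real.sqrt ((((r-m)/2)^2 + ((r+m)/2)^2 - (0:ℝ)^2)/(2*(((r+m)/2)^2 - (0:ℝ)^2)))
        * Real.sin ((0:ℝ)*(2*u)) * Real.cos ψ = _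
    simp only [Lfun, bipolarLawson, Matrix.cons_val_zero, Matrix.cons_val_one, Matrix.head_cons,
      Matrix.cons_val_two, Matrix.tail_cons, Matrix.cons_val_three, Matrix.cons_val_four,
      cons_val_five', PiLp.smul_apply, smul_eq_mul, WithLp.ofLp_toLp, Matrix.cons_val_zero', Matrix.cons_val_succ']
    rw [show (0:ℝ)*(2*u) = 0 from by ring, Real.sin_zero]
    field_simp
    ring
  · show Real.sqrt ((((r+m)/2)^2 - ((r-m)/2)^2 - (0:ℝ)^2)/(2*(((r+m)/2)^2 - (0:ℝ)^2)))
        * Real.cos ((r+m)/2*(2*u))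
        * Real.sqrt (1 - ((0:ℝ)^2 - ((r-m)/2)^2)/(((r+m)/2)^2 - ((r-m)/2)^2) * Real.sin ψ^2) = _
    simp only [Lfun, bipolarLawson, Matrix.cons_val_zero, Matrix.cons_val_one, Matrix.head_cons,
      Matrix.cons_val_two, Matrix.tail_cons, Matrix.cons_val_three, Matrix.cons_val_four,
      cons_val_five', PiLp.smul_apply, smul_eq_mul, WithLp.ofLp_toLp, Matrix.cons_val_zero', Matrix.cons_val_succ']
    rw [mul_right_comm, hco45, show (r+m)/2*(2*u) = r*u + m*u from by ring, Real.cos_add]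
    field_simp
    ring
  · show Real.sqrt ((((r+m)/2)^2 - ((r-m)/2)^2 - (0:ℝ)^2)/(2*(((r+m)/2)^2 - (0:ℝ)^2)))
        * Real.sin ((r+m)/2*(2*u))
        * Real.sqrt (1 - ((0:ℝ)^2 - ((r-m)/2)^2)/(((r+m)/2)^2 - ((r-m)/2)^2) * Real.sin ψ^2) = _
    simp only [Lfun, bipolarLawson, Matrix.cons_val_zero, Matrix.cons_val_one, Matrix.head_cons,
      Matrix.cons_val_two, Matrix.tail_cons, Matrix.cons_val_three, Matrix.cons_val_four,
      cons_val_five', PiLp.smul_apply, smul_eq_mul, WithLp.ofLp_toLp, Matrix.cons_val_zero', Matrix.cons_val_succ']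
    rw [mul_right_comm, hco45, show (r+m)/2*(2*u) = r*u + m*u from by ring, Real.sin_add]
    field_simp
    ring

/-! ### Main theorem -/

/-- For coprime integers `r > m > 0` with `rm` odd, the bipolar Lawson surface
`τ̃_{r,m}` (a torus when `rm ≡ 1 (mod 4)`, a Klein bottle when `rm ≡ 3 (mod 4)`)
is isometric to the generalized Lawson surface `T_{(r−m)/2,0,(r+m)/2}`: there is
a smooth diffeomorphism `φ` of `ℝ²` such that `F_{(r−m)/2,0,(r+m)/2} ∘ φ` and
`Ĩ_{r,m}` induce the same first fundamental form. -/
theorem bipolarLawson_isometric_genLawson_odd (r m : ℤ) (hm : 0 < m) (hrm : m < r)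
    (hcop : IsCoprime r m) (hodd : Odd (r * m)) :
    ∃ φ : (ℝ × ℝ) ≃ (ℝ × ℝ), ContDiff ℝ (⊤ : ℕ∞) (φ : ℝ × ℝ → ℝ × ℝ) ∧
      ContDiff ℝ (⊤ : ℕ∞) (φ.symm : ℝ × ℝ → ℝ × ℝ) ∧
      ∀ (p : ℝ × ℝ) (v w : ℝ × ℝ),
        ⟪fderiv ℝ (genLawson (((r : ℝ) - m) / 2) 0 (((r : ℝ) + m) / 2) ∘ φ) p v,
          fderiv ℝ (genLawson (((r : ℝ) - m) / 2) 0 (((r : ℝ) + m) / 2) ∘ φ) p w⟫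
        = ⟪fderiv ℝ (bipolarLawson r m) p v, fderiv ℝ (bipolarLawson r m) p w⟫ := by
  have hm' : (0:ℝ) < (m:ℝ) := by exact_mod_cast hm
  have hrm' : ((m:ℝ)) < (r:ℝ) := by exact_mod_cast hrm
  have ha : (0:ℝ) < ((r:ℝ) - m)/2 := by linarith
  have hac : ((r:ℝ) - m)/2 < ((r:ℝ) + m)/2 := by linarith
  let e2 : ℝ ≃ ℝ :=
    { toFun := fun u => 2*u
      invFun := fun u => u/2
      left_inv := fun u => by ring
      right_inv := fun u => by ring }
  let eψ : ℝ ≃ ℝ := psiEquiv ha hac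
  refine ⟨Equiv.prodCongr e2 eψ, ?_, ?_, ?_⟩
  · have hcoe : ⇑(Equiv.prodCongr e2 eψ)
        = fun p : ℝ × ℝ => ((2*p.1 : ℝ), psifun (((r:ℝ) - m)/2) (((r:ℝ) + m)/2) p.2) := rfl
    rw [hcoe]
    exact (contDiff_const.mul contDiff_fst).prodMk ((psifun_contDiff ha hac).comp contDiff_snd)
  · have hcoe : ⇑(Equiv.prodCongr e2 eψ).symm
        = fun p : ℝ × ℝ => ((p.1/2 : ℝ), eψ.symm p.2) := rfl
    rw [hcoe]
    exact (contDiff_fst.div_const 2).prodMk ((psiEquiv_symm_contDiff ha hac).comp contDiff_snd)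
  · intro p w1 w2
    have hfun : genLawson (((r:ℝ) - m)/2) 0 (((r:ℝ) + m)/2) ∘ ⇑(Equiv.prodCongr e2 eψ)
        = ⇑(Liso hm' hrm').toContinuousLinearEquiv ∘ bipolarLawson (r:ℝ) (m:ℝ) := by
      funext q
      show genLawson (((r:ℝ) - m)/2) 0 (((r:ℝ) + m)/2)
          (2*q.1, psifun (((r:ℝ) - m)/2) (((r:ℝ) + m)/2) q.2) = _
      rw [key (r:ℝ) (m:ℝ) hm' hrm' q.1 q.2]
      rfl
    rw [hfun, ContinuousLinearEquiv.comp_fderiv]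
    simp only [ContinuousLinearMap.coe_comp', Function.comp_apply,
      ContinuousLinearEquiv.coe_coe]
    have hz : ∀ z, ((Liso hm' hrm').toContinuousLinearEquiv : EuclideanSpace ℝ (Fin 6) →
        EuclideanSpace ℝ (Fin 6)) z = (Liso hm' hrm') z := fun z => rfl
    rw [hz, hz]
    exact (Liso hm' hrm').inner_map_map _ _
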